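/- arXiv:2101.04492 — 3 statements merged into one kernel-verified Lean document; each statement's English description precedes it below -/
import Mathlib

section
/- Let x ∈ ⟨ρ⟩ℝ. The following are equivalent: (1) x is invertible in ⟨ρ⟩ℝ and x ≥ 0 (i.e. x > 0); (2) for each representative (x_ε) of x one has x_ε > 0 for ε small; (3) for each representative (x_ε) of x there exists m ∈ ℕ such that x_ε > ρ_ε^m for ε small; (4) there exists a representative (x_ε) of x and m ∈ ℕ such that x_ε > ρ_ε^m for ε small. -/
noncomputable section

open Set Filter Topology MeasureTheory

/-- The index set predicate: `ε ∈ (0,1]`. -/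
def II (ε : ℝ) : Prop := 0 < ε ∧ ε ≤ 1

/-- A property `P ε` holds "for `ε` small". -/
def EvSmall (P : ℝ → Prop) : Prop :=
  ∃ ε₀ : ℝ, 0 < ε₀ ∧ ε₀ ≤ 1 ∧ ∀ ε : ℝ, 0 < ε → ε ≤ ε₀ → P ε

/-- A gauge: a net `ρ` with values in `(0,1]` tending to `0` as `ε → 0⁺`. -/
structure IsGauge (ρ : ℝ → ℝ) : Prop where
  pos : ∀ ε, II ε → 0 < ρ ε
  le_one : ∀ ε, II ε → ρ ε ≤ 1
  tendsto_zero : Filter.Tendsto ρ (nhdsWithin 0 (Set.Ioi 0)) (nhds 0)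

/-- A `ρ`-moderate net with values in a normed space. -/
def Moderate (ρ : ℝ → ℝ) {E : Type*} [NormedAddCommGroup E] (x : ℝ → E) : Prop :=
  ∃ N : ℕ, EvSmall (fun ε => ‖x ε‖ ≤ ρ ε ^ (-(N : ℤ)))

/-- `ρ`-equivalence of nets. -/
def REquiv (ρ : ℝ → ℝ) {E : Type*} [NormedAddCommGroup E] (x y : ℝ → E) : Prop :=
  ∀ m : ℕ, EvSmall (fun ε => ‖x ε - y ε‖ ≤ ρ ε ^ m)

/-- The type of `ρ`-moderate nets. -/
abbrev ModNet (ρ : ℝ → ℝ) (E : Type*) [NormedAddCommGroup E] : Type _ :=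
  {x : ℝ → E // Moderate ρ x}

/-- The Robinson–Colombeau ring of generalized points `⟨ρ⟩E`. -/
def RC (ρ : ℝ → ℝ) (E : Type*) [NormedAddCommGroup E] : Type _ :=
  Quot (fun x y : ModNet ρ E => REquiv ρ x.1 y.1)

/-- The class `[x_ε]` of a moderate net. -/
def RC.mk {ρ : ℝ → ℝ} {E : Type*} [NormedAddCommGroup E] (x : ModNet ρ E) : RC ρ E :=
  Quot.mk _ x

theorem moderate_const_zero (ρ : ℝ → ℝ) {E : Type*} [NormedAddCommGroup E] :
    Moderate ρ (fun _ : ℝ => (0 : E)) := by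
  refine ⟨0, 1, one_pos, le_rfl, fun ε _ _ => ?_⟩
  simp

/-- The zero generalized point. -/
def RC.zero (ρ : ℝ → ℝ) (E : Type*) [NormedAddCommGroup E] : RC ρ E :=
  RC.mk ⟨fun _ => 0, moderate_const_zero ρ⟩

/-- The order: `x ≤ y` iff there are representatives with `x_ε ≤ y_ε` for all `ε`. -/
def RC.Le {ρ : ℝ → ℝ} (x y : RC ρ ℝ) : Prop :=
  ∃ a b : ModNet ρ ℝ, RC.mk a = x ∧ RC.mk b = y ∧ ∀ ε, II ε → a.1 ε ≤ b.1 ε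

/-- `x` is invertible in the ring `⟨ρ⟩ℝ`. -/
def RC.IsInvertible {ρ : ℝ → ℝ} (x : RC ρ ℝ) : Prop :=
  ∃ a : ModNet ρ ℝ, RC.mk a = x ∧
    ∃ b : ℝ → ℝ, Moderate ρ b ∧ REquiv ρ (fun ε => a.1 ε * b ε) (fun _ => (1 : ℝ))

/-- `r` is a nonnegative invertible generalized number, i.e. `r > 0`. -/
def RC.PosInv {ρ : ℝ → ℝ} (r : RC ρ ℝ) : Prop :=
  RC.IsInvertible r ∧ RC.Le (RC.zero ρ ℝ) r

/-- Strict order: `x < y` iff some nonnegative invertible `r` satisfies `r ≤ y - x`. -/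
def RC.Lt {ρ : ℝ → ℝ} (x y : RC ρ ℝ) : Prop :=
  ∃ r : RC ρ ℝ, RC.PosInv r ∧
    ∃ a b c : ModNet ρ ℝ, RC.mk a = x ∧ RC.mk b = y ∧ RC.mk c = r ∧
      ∀ ε, II ε → c.1 ε ≤ b.1 ε - a.1 ε

/-- `≤` between (the classes of) two scalar nets: `u ≤ v + z` for some negligible `z`. -/
def NetLe (ρ : ℝ → ℝ) (u v : ℝ → ℝ) : Prop :=
  ∃ z : ℝ → ℝ, REquiv ρ z (fun _ => (0 : ℝ)) ∧ EvSmall (fun ε => u ε ≤ v ε + z ε)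

/-- `|y - x| < r` in `⟨ρ⟩E`. -/
def NormLt {ρ : ℝ → ℝ} {E : Type*} [NormedAddCommGroup E]
    (x y : RC ρ E) (r : RC ρ ℝ) : Prop :=
  ∃ s : RC ρ ℝ, RC.PosInv s ∧
    ∃ a b : ModNet ρ E, ∃ c d : ModNet ρ ℝ,
      RC.mk a = x ∧ RC.mk b = y ∧ RC.mk c = r ∧ RC.mk d = s ∧
      ∀ ε, II ε → d.1 ε ≤ c.1 ε - ‖b.1 ε - a.1 ε‖

/-- The sharp ball `B_r(x)`. -/
def sharpBall {ρ : ℝ → ℝ} {E : Type*} [NormedAddCommGroup E]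
    (x : RC ρ E) (r : RC ρ ℝ) : Set (RC ρ E) :=
  {y | NormLt x y r}

/-- The sharp topology, generated by the balls with invertible positive radius. -/
def sharpTopology (ρ : ℝ → ℝ) (E : Type*) [NormedAddCommGroup E] :
    TopologicalSpace (RC ρ E) :=
  TopologicalSpace.generateFrom {S | ∃ x r, RC.PosInv r ∧ S = sharpBall x r}

/-- The internal set `[A_ε]`. -/
def InternalSet (ρ : ℝ → ℝ) {E : Type*} [NormedAddCommGroup E]
    (A : ℝ → Set E) : Set (RC ρ E) :=
  {x | ∃ a : ModNet ρ E, RC.mk a = x ∧ EvSmall (fun ε => a.1 ε ∈ A ε)}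

/-- The strongly internal set `⟨A_ε⟩`. -/
def StrongSet (ρ : ℝ → ℝ) {E : Type*} [NormedAddCommGroup E]
    (A : ℝ → Set E) : Set (RC ρ E) :=
  {x | ∀ a : ModNet ρ E, RC.mk a = x → EvSmall (fun ε => a.1 ε ∈ A ε)}

/-- Euclidean `ℝⁿ`. -/
abbrev RVec (n : ℕ) := EuclideanSpace ℝ (Fin n)

/-- Partial derivative in the `i`-th coordinate direction. -/
def pderivI {n : ℕ} {F : Type*} [NormedAddCommGroup F] [NormedSpace ℝ F]
    (i : Fin n) (f : RVec n → F) : RVec n → F :=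
  fun x => fderiv ℝ f x (EuclideanSpace.single i 1)

/-- The multi-index partial derivative `∂^α`. -/
def pderivM {n : ℕ} {F : Type*} [NormedAddCommGroup F] [NormedSpace ℝ F]
    (α : Fin n → ℕ) (f : RVec n → F) : RVec n → F :=
  (List.finRange n).foldr (fun i g => (pderivI i)^[α i] g) f

/-- A net of smooth functions `f_ε ∈ C^∞(Ω_ε, F)` defining a generalized smooth
function of type `X → Y`. -/
structure DefinesGSF (ρ : ℝ → ℝ) {n : ℕ} {F : Type*} [NormedAddCommGroup F]
    [NormedSpace ℝ F] (Ω : ℝ → Set (RVec n)) (f : ℝ → RVec n → F)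
    (X : Set (RC ρ (RVec n))) (Y : Set (RC ρ F)) : Prop where
  open' : ∀ ε, II ε → IsOpen (Ω ε)
  smooth : ∀ ε, II ε → ContDiffOn ℝ (⊤ : ℕ∞) (f ε) (Ω ε)
  domain : X ⊆ StrongSet ρ Ω
  val_mod : ∀ a : ModNet ρ (RVec n), RC.mk a ∈ X → Moderate ρ (fun ε => f ε (a.1 ε))
  val_mem : ∀ a : ModNet ρ (RVec n), RC.mk a ∈ X →
    ∀ hm : Moderate ρ (fun ε => f ε (a.1 ε)), RC.mk ⟨_, hm⟩ ∈ Y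
  deriv_mod : ∀ a : ModNet ρ (RVec n), RC.mk a ∈ X → ∀ α : Fin n → ℕ,
    Moderate ρ (fun ε => pderivM α (f ε) (a.1 ε))

/-- `f : X → Y` is a generalized smooth function. -/
def IsGSFOn (ρ : ℝ → ℝ) {n : ℕ} {F : Type*} [NormedAddCommGroup F] [NormedSpace ℝ F]
    (f : RC ρ (RVec n) → RC ρ F) (X : Set (RC ρ (RVec n))) (Y : Set (RC ρ F)) : Prop :=
  ∃ Ω fn, DefinesGSF ρ Ω fn X Y ∧
    ∀ a : ModNet ρ (RVec n), RC.mk a ∈ X →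
      ∀ hm : Moderate ρ (fun ε => fn ε (a.1 ε)), f (RC.mk a) = RC.mk ⟨_, hm⟩

/-- One-dimensional version: a net of smooth functions `f_ε ∈ C^∞(Ω_ε, ℝ)`,
`Ω_ε ⊆ ℝ`, defining a generalized smooth function of type `X → Y`. -/
structure DefinesGSF1 (ρ : ℝ → ℝ) (Ω : ℝ → Set ℝ) (f : ℝ → ℝ → ℝ)
    (X Y : Set (RC ρ ℝ)) : Prop where
  open' : ∀ ε, II ε → IsOpen (Ω ε)
  smooth : ∀ ε, II ε → ContDiffOn ℝ (⊤ : ℕ∞) (f ε) (Ω ε)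
  domain : X ⊆ StrongSet ρ Ω
  val_mod : ∀ a : ModNet ρ ℝ, RC.mk a ∈ X → Moderate ρ (fun ε => f ε (a.1 ε))
  val_mem : ∀ a : ModNet ρ ℝ, RC.mk a ∈ X →
    ∀ hm : Moderate ρ (fun ε => f ε (a.1 ε)), RC.mk ⟨_, hm⟩ ∈ Y
  deriv_mod : ∀ a : ModNet ρ ℝ, RC.mk a ∈ X → ∀ k : ℕ,
    Moderate ρ (fun ε => iteratedDeriv k (f ε) (a.1 ε))

/-- `f : X → Y` (`X, Y ⊆ ⟨ρ⟩ℝ`) is a generalized smooth function. -/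
def IsGSFOn1 (ρ : ℝ → ℝ) (f : RC ρ ℝ → RC ρ ℝ) (X Y : Set (RC ρ ℝ)) : Prop :=
  ∃ Ω fn, DefinesGSF1 ρ Ω fn X Y ∧
    ∀ a : ModNet ρ ℝ, RC.mk a ∈ X →
      ∀ hm : Moderate ρ (fun ε => fn ε (a.1 ε)), f (RC.mk a) = RC.mk ⟨_, hm⟩

/-- The interval `[a,b] ⊆ ⟨ρ⟩ℝ`. -/
def RCIcc {ρ : ℝ → ℝ} (a b : RC ρ ℝ) : Set (RC ρ ℝ) := {x | RC.Le a x ∧ RC.Le x b}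

/-- The interval `(a,b) ⊆ ⟨ρ⟩ℝ`. -/
def RCIoo {ρ : ℝ → ℝ} (a b : RC ρ ℝ) : Set (RC ρ ℝ) := {x | RC.Lt a x ∧ RC.Lt x b}

/-- A sharply bounded net of sets. -/
def SharplyBdd (ρ : ℝ → ℝ) {E : Type*} [NormedAddCommGroup E] (A : ℝ → Set E) : Prop :=
  ∃ N : ℕ, EvSmall (fun ε => ∀ y ∈ A ε, ‖y‖ ≤ ρ ε ^ (-(N : ℤ)))


section StmtZeroHelpers

variable {ρ : ℝ → ℝ}

lemma evsmall_and {P Q : ℝ → Prop} (hP : EvSmall P) (hQ : EvSmall Q) :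
    EvSmall fun ε => P ε ∧ Q ε := by
  obtain ⟨a, ha0, ha1, ha⟩ := hP
  obtain ⟨b, hb0, hb1, hb⟩ := hQ
  exact ⟨min a b, lt_min ha0 hb0, (min_le_left a b).trans ha1,
    fun ε h1 h2 => ⟨ha ε h1 (h2.trans (min_le_left _ _)), hb ε h1 (h2.trans (min_le_right _ _))⟩⟩

lemma evsmall_mono {P Q : ℝ → Prop} (h : ∀ ε, 0 < ε → ε ≤ 1 → P ε → Q ε) (hP : EvSmall P) :
    EvSmall Q := by
  obtain ⟨a, ha0, ha1, ha⟩ := hP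
  exact ⟨a, ha0, ha1, fun ε h1 h2 => h ε h1 (h2.trans ha1) (ha ε h1 h2)⟩

lemma gauge_lt (hρ : IsGauge ρ) {c : ℝ} (hc : 0 < c) : EvSmall fun ε => ρ ε < c := by
  obtain ⟨δ, hδ, h⟩ := Metric.tendsto_nhdsWithin_nhds.mp hρ.tendsto_zero c hc
  refine ⟨min (δ / 2) 1, by positivity, min_le_right _ _, fun ε h1 h2 => ?_⟩
  have h3 : dist ε 0 < δ := by
    rw [Real.dist_eq, sub_zero, abs_of_pos h1]
    have := h2.trans (min_le_left _ _); linarith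
  have := h (Set.mem_Ioi.mpr h1) h3
  rw [Real.dist_eq, sub_zero] at this
  exact (le_abs_self _).trans_lt this

lemma requiv_equivalence (hρ : IsGauge ρ) :
    Equivalence (fun x y : ModNet ρ ℝ => REquiv ρ x.1 y.1) := by
  constructor
  · intro x m
    refine ⟨1, one_pos, le_rfl, fun ε h1 h2 => ?_⟩
    simpa using pow_nonneg (hρ.pos ε ⟨h1, h2⟩).le m
  · intro x y h m
    exact evsmall_mono (fun ε _ _ hle => by rwa [norm_sub_rev]) (h m)
  · intro x y z hxy hyz m
    have := evsmall_and (evsmall_and (hxy (m + 1)) (hyz (m + 1))) (gauge_lt hρ one_half_pos)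
    refine evsmall_mono (fun ε h1 h2 hc => ?_) this
    obtain ⟨⟨ha, hb⟩, hh⟩ := hc
    have hr0 : 0 < ρ ε := hρ.pos ε ⟨h1, h2⟩
    have hpm : 0 < ρ ε ^ m := pow_pos hr0 m
    calc ‖x.1 ε - z.1 ε‖ ≤ ‖x.1 ε - y.1 ε‖ + ‖y.1 ε - z.1 ε‖ := norm_sub_le_norm_sub_add_norm_sub _ _ _
      _ ≤ ρ ε ^ (m + 1) + ρ ε ^ (m + 1) := add_le_add ha hb
      _ = ρ ε ^ m * (2 * ρ ε) := by ring
      _ ≤ ρ ε ^ m * 1 := by nlinarith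
      _ = ρ ε ^ m := mul_one _

lemma mk_eq_mk_iff (hρ : IsGauge ρ) {a b : ModNet ρ ℝ} :
    RC.mk a = RC.mk b ↔ REquiv ρ a.1 b.1 := by
  exact Quot.eq.trans (requiv_equivalence hρ).eqvGen_iff

end StmtZeroHelpers

/-- characterization of strictly positive (i.e. nonnegative invertible)
generalized numbers, Lemma `lem:mayer`. -/
theorem stmt_0 {ρ : ℝ → ℝ} (hρ : IsGauge ρ) (x : RC ρ ℝ) :
    List.TFAE
      [RC.IsInvertible x ∧ RC.Le (RC.zero ρ ℝ) x,
       ∀ a : ModNet ρ ℝ, RC.mk a = x → EvSmall (fun ε => 0 < a.1 ε),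
       ∀ a : ModNet ρ ℝ, RC.mk a = x → ∃ m : ℕ, EvSmall (fun ε => ρ ε ^ m < a.1 ε),
       ∃ a : ModNet ρ ℝ, RC.mk a = x ∧ ∃ m : ℕ, EvSmall (fun ε => ρ ε ^ m < a.1 ε)] := by
  classical
  tfae_have 3 → 2 := by
    intro h a ha
    obtain ⟨m, hm⟩ := h a ha
    exact evsmall_mono (fun ε h1 h2 hlt => (pow_pos (hρ.pos ε ⟨h1, h2⟩) m).trans hlt) hm
  tfae_have 3 → 4 := by
    intro h
    obtain ⟨a, ha⟩ := Quot.exists_rep x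
    exact ⟨a, ha, h a ha⟩
  tfae_have 4 → 3 := by
    intro h c hc
    obtain ⟨a, ha, m, hm⟩ := h
    have hre : REquiv ρ c.1 a.1 := (mk_eq_mk_iff hρ).mp (hc.trans ha.symm)
    refine ⟨m + 1, ?_⟩
    refine evsmall_mono (fun ε h1 h2 hc' => ?_)
      (evsmall_and (evsmall_and hm (hre (m + 2))) (gauge_lt hρ one_half_pos))
    obtain ⟨⟨hlt, hab⟩, hhalf⟩ := hc'
    have hr0 : 0 < ρ ε := hρ.pos ε ⟨h1, h2⟩
    have hp : 0 < ρ ε ^ m := pow_pos hr0 m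
    have h5 : a.1 ε - ρ ε ^ (m + 2) ≤ c.1 ε := by
      have := (abs_le.mp (by simpa [Real.norm_eq_abs] using hab)).1; linarith
    have e1 : ρ ε ^ (m + 1) = ρ ε ^ m * ρ ε := pow_succ _ _
    have e2 : ρ ε ^ (m + 2) = ρ ε ^ m * ρ ε * ρ ε := by rw [pow_succ, pow_succ]
    nlinarith [mul_pos hp (show (0:ℝ) < 1 - ρ ε - ρ ε * ρ ε by nlinarith)]
  tfae_have 4 → 1 := by
    intro h
    obtain ⟨a, ha, m, ε₀, hε0, hε1, hev⟩ := h
    set a' : ℝ → ℝ := fun ε => max (a.1 ε) (ρ ε ^ m) with ha'def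
    obtain ⟨N, hN⟩ := a.2
    have moda' : Moderate ρ a' := by
      refine ⟨N, evsmall_mono (fun ε h1 h2 hb => ?_) hN⟩
      have hr0 : 0 < ρ ε := hρ.pos ε ⟨h1, h2⟩
      have hr1 : ρ ε ≤ 1 := hρ.le_one ε ⟨h1, h2⟩
      have h1N : (1:ℝ) ≤ ρ ε ^ (-(N:ℤ)) := by
        rw [zpow_neg, zpow_natCast]
        exact (one_le_inv₀ (pow_pos hr0 N)).mpr (pow_le_one₀ hr0.le hr1)
      rw [Real.norm_eq_abs] at hb ⊢
      rw [abs_le] at hb ⊢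
      constructor
      · have : (0:ℝ) < ρ ε ^ m := pow_pos hr0 m
        have : (0:ℝ) ≤ a' ε := le_trans this.le (le_max_right _ _)
        linarith [hb.1]
      · have hm1 : ρ ε ^ m ≤ 1 := pow_le_one₀ hr0.le hr1
        exact max_le (hb.2) (hm1.trans h1N)
    have hre : REquiv ρ a' a.1 := by
      intro m'
      refine ⟨ε₀, hε0, hε1, fun ε h1 h2 => ?_⟩
      have := hev ε h1 h2
      have hmax : a' ε = a.1 ε := max_eq_left this.le
      show ‖a' ε - a.1 ε‖ ≤ ρ ε ^ m'
      rw [hmax, sub_self, norm_zero]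
      exact pow_nonneg (hρ.pos ε ⟨h1, h2.trans hε1⟩).le m'
    have hmk : RC.mk ⟨a', moda'⟩ = x := ((mk_eq_mk_iff hρ).mpr hre).trans ha
    constructor
    · refine ⟨⟨a', moda'⟩, hmk, fun ε => (a' ε)⁻¹, ⟨m, ?_⟩, ?_⟩
      · refine ⟨ε₀, hε0, hε1, fun ε h1 h2 => ?_⟩
        have hr0 : 0 < ρ ε := hρ.pos ε ⟨h1, h2.trans hε1⟩
        have hpos : (0:ℝ) < ρ ε ^ m := pow_pos hr0 m
        have ha'pos : ρ ε ^ m ≤ a' ε := le_max_right _ _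
        show ‖(a' ε)⁻¹‖ ≤ ρ ε ^ (-(m:ℤ))
        rw [Real.norm_eq_abs, abs_inv, abs_of_pos (hpos.trans_le ha'pos),
          zpow_neg, zpow_natCast]
        exact inv_anti₀ hpos ha'pos
      · intro m'
        refine ⟨ε₀, hε0, hε1, fun ε h1 h2 => ?_⟩
        have hr0 : 0 < ρ ε := hρ.pos ε ⟨h1, h2.trans hε1⟩
        have ha'pos : (0:ℝ) < a' ε := lt_of_lt_of_le (pow_pos hr0 m) (le_max_right _ _)
        show ‖a' ε * (a' ε)⁻¹ - 1‖ ≤ ρ ε ^ m'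
        rw [show a' ε * (a' ε)⁻¹ = 1 from mul_inv_cancel₀ ha'pos.ne', sub_self, norm_zero]
        exact pow_nonneg hr0.le m'
    · refine ⟨⟨fun _ => 0, moderate_const_zero ρ⟩, ⟨a', moda'⟩, rfl, hmk, fun ε hII => ?_⟩
      exact le_trans (pow_nonneg (hρ.pos ε hII).le m) (le_max_right _ _)
  tfae_have 1 → 4 := by
    rintro ⟨⟨a, ha, b, ⟨N, hN⟩, hab⟩, u, v, hu, hv, huv⟩
    refine ⟨a, ha, N + 2, ?_⟩
    have hu0 : REquiv ρ u.1 (fun _ => (0:ℝ)) :=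
      (mk_eq_mk_iff hρ (b := ⟨fun _ => 0, moderate_const_zero ρ⟩)).mp hu
    have hva : REquiv ρ v.1 a.1 := (mk_eq_mk_iff hρ).mp (hv.trans ha.symm)
    have hall := evsmall_and (evsmall_and (evsmall_and (hab 1) hN)
      (evsmall_and (hu0 (N + 3)) (hva (N + 3)))) (gauge_lt hρ one_half_pos)
    refine evsmall_mono (fun ε h1 h2 hc => ?_) hall
    obtain ⟨⟨⟨h1', h2'⟩, ⟨h4', h5'⟩⟩, hhalf⟩ := hc
    have hr0 : 0 < ρ ε := hρ.pos ε ⟨h1, h2⟩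
    set r := ρ ε with hrdef
    have hp : 0 < r ^ N := pow_pos hr0 N
    rw [Real.norm_eq_abs] at h1' h2' h4' h5'
    have hb' : |b ε| ≤ (r ^ N)⁻¹ := by rwa [zpow_neg, zpow_natCast] at h2'
    have hab2 : 1 / 2 ≤ a.1 ε * b ε := by
      have := (abs_le.mp (by simpa using h1')).1; linarith
    have habs : 1 / 2 ≤ |a.1 ε| * |b ε| := by
      rw [← abs_mul]; exact hab2.trans (le_abs_self _)
    have hA : r ^ N / 2 ≤ |a.1 ε| := by
      have h3 : 1 / 2 ≤ |a.1 ε| * (r ^ N)⁻¹ :=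
        habs.trans (mul_le_mul_of_nonneg_left hb' (abs_nonneg _))
      calc r ^ N / 2 = 1 / 2 * r ^ N := by ring
        _ ≤ |a.1 ε| * (r ^ N)⁻¹ * r ^ N := mul_le_mul_of_nonneg_right h3 hp.le
        _ = |a.1 ε| := by field_simp
    have hB : -(2 * r ^ (N + 3)) ≤ a.1 ε := by
      have hu1 := (abs_le.mp (by simpa using h4')).1
      have hv1 := (abs_le.mp h5').2
      have huvε := huv ε ⟨h1, h2⟩
      linarith
    have e2 : r ^ (N + 2) = r ^ N * (r * r) := by ring
    have e3 : r ^ (N + 3) = r ^ N * (r * r * r) := by ring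
    rcases le_or_gt 0 (a.1 ε) with hsgn | hsgn
    · rw [abs_of_nonneg hsgn] at hA
      nlinarith [mul_pos hp (show (0:ℝ) < 1 / 2 - r * r by nlinarith)]
    · exfalso
      rw [abs_of_neg hsgn] at hA
      nlinarith [mul_pos hp (show (0:ℝ) < 1 / 2 - 2 * (r * r * r) by nlinarith)]
  tfae_have 2 → 3 := by
    intro h2 a ha
    by_contra hno
    push_neg at hno
    have H : ∀ (m : ℕ) (δ : ℝ), ∃ ε, 0 < ε ∧ ε ≤ 1 ∧ (0 < δ → ε ≤ δ) ∧ a.1 ε ≤ ρ ε ^ m := by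
      have key : ∀ (m : ℕ) (δ : ℝ), 0 < δ → δ ≤ 1 → ∃ ε, 0 < ε ∧ ε ≤ δ ∧ a.1 ε ≤ ρ ε ^ m := by
        intro m δ hδ0 hδ1
        by_contra hc
        push_neg at hc
        exact hno m ⟨δ, hδ0, hδ1, fun ε he1 he2 => hc ε he1 he2⟩
      intro m δ
      rcases lt_or_ge 0 δ with hδ | hδ
      · obtain ⟨ε, he1, he2, he3⟩ := key m (min δ 1) (lt_min hδ one_pos) (min_le_right _ _)
        exact ⟨ε, he1, he2.trans (min_le_right _ _), fun _ => he2.trans (min_le_left _ _), he3⟩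
      · obtain ⟨ε, he1, he2, he3⟩ := key m 1 one_pos le_rfl
        exact ⟨ε, he1, he2, fun h => absurd hδ (not_le.mpr h), he3⟩
    choose g hg0 hg1 hg2 hg3 using H
    set e : ℕ → ℝ := fun m => Nat.rec (g 0 1) (fun k ih => g (k + 1) (ih / 2)) m with hedef
    have he0 : ∀ m, 0 < e m := by rintro (_ | k); exacts [hg0 0 1, hg0 (k + 1) _]
    have he1 : ∀ m, e m ≤ 1 := by rintro (_ | k); exacts [hg1 0 1, hg1 (k + 1) _]
    have he3 : ∀ m, a.1 (e m) ≤ ρ (e m) ^ m := by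
      rintro (_ | k); exacts [hg3 0 1, hg3 (k + 1) _]
    have hstep : ∀ m, e (m + 1) ≤ e m / 2 := fun m => hg2 (m + 1) _ (half_pos (he0 m))
    have hanti : StrictAnti e :=
      strictAnti_nat_of_succ_lt fun m => (hstep m).trans_lt (half_lt_self (he0 m))
    have hbound : ∀ m, e m ≤ (1 / 2 : ℝ) ^ m := by
      intro m
      induction m with
      | zero => simpa using he1 0
      | succ k ih =>
        calc e (k + 1) ≤ e k / 2 := hstep k
          _ ≤ (1 / 2 : ℝ) ^ k / 2 := by linarith
          _ = (1 / 2 : ℝ) ^ (k + 1) := by ring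
    set b : ℝ → ℝ := fun ε => if ∃ k, e k = ε then min (a.1 ε) 0 else a.1 ε with hbdef
    have hble : ∀ ε, ‖b ε‖ ≤ ‖a.1 ε‖ := by
      intro ε
      rw [hbdef]
      simp only
      split_ifs with h
      · rcases le_total (a.1 ε) 0 with hle | hge
        · rw [min_eq_left hle]
        · rw [min_eq_right hge]; simp [norm_nonneg]
      · exact le_rfl
    have modb : Moderate ρ b := by
      obtain ⟨N, hN⟩ := a.2
      exact ⟨N, evsmall_mono (fun ε _ _ hb => (hble ε).trans hb) hN⟩
    have hreb : REquiv ρ b a.1 := by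
      intro m
      refine ⟨e m, he0 m, he1 m, fun ε h1 h2 => ?_⟩
      show ‖b ε - a.1 ε‖ ≤ ρ ε ^ m
      have hII : II ε := ⟨h1, h2.trans (he1 m)⟩
      have hr0 : 0 < ρ ε := hρ.pos ε hII
      by_cases hmem : ∃ k, e k = ε
      · obtain ⟨k, hk⟩ := hmem
        have hkm : m ≤ k := by
          by_contra hlt
          push_neg at hlt
          have h' := hanti hlt
          rw [hk] at h'
          exact absurd h' (not_lt.mpr h2)
        have hbe : b ε = min (a.1 ε) 0 := by rw [hbdef]; exact if_pos ⟨k, hk⟩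
        have hak : a.1 ε ≤ ρ ε ^ k := by have := he3 k; rwa [hk] at this
        rcases le_total (a.1 ε) 0 with hle | hge
        · rw [hbe, min_eq_left hle, sub_self, norm_zero]
          exact pow_nonneg hr0.le m
        · rw [hbe, min_eq_right hge, zero_sub, norm_neg, Real.norm_eq_abs, abs_of_nonneg hge]
          exact hak.trans (pow_le_pow_of_le_one hr0.le (hρ.le_one ε hII) hkm)
      · have hbe : b ε = a.1 ε := by rw [hbdef]; exact if_neg hmem
        rw [hbe, sub_self, norm_zero]
        exact pow_nonneg hr0.le m
    have hmkb : RC.mk ⟨b, modb⟩ = x := ((mk_eq_mk_iff hρ).mpr hreb).trans ha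
    obtain ⟨ε₀, hε0, hε1, hpos⟩ := h2 ⟨b, modb⟩ hmkb
    obtain ⟨n, hn⟩ := exists_pow_lt_of_lt_one hε0 (by norm_num : (1 / 2 : ℝ) < 1)
    have hlt : (0:ℝ) < b (e n) := hpos (e n) (he0 n) ((hbound n).trans hn.le)
    have hbe : b (e n) = min (a.1 (e n)) 0 := by rw [hbdef]; exact if_pos ⟨n, rfl⟩
    rw [hbe] at hlt
    exact absurd hlt (not_lt.mpr (min_le_right _ _))
  tfae_finish
end
end

section
/- Let 𝔯 ⊆ ⟨ρ⟩ℝ be a set of radii, i.e. a nonempty set of nonnegative invertible elements closed under binary infimum r∧s := [min(r_ε, s_ε)] and under multiplication by arbitrary positive real scalars. For x, y ∈ ⟨ρ⟩ℝ write x <_𝔯 y if ∃r ∈ 𝔯 with r ≤ y − x, and for r ∈ 𝔯, x ∈ ⟨ρ⟩ℝⁿ set B_r^𝔯(x) := {y ∈ ⟨ρ⟩ℝⁿ : |y − x| <_𝔯 r}. Then the family of balls {B_r^𝔯(x) : r ∈ 𝔯, x ∈ ⟨ρ⟩ℝⁿ} is a base for a topology on ⟨ρ⟩ℝⁿ; that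 is, whenever z ∈ B_r^𝔯(x) ∩ B_s^𝔯(y) there exists ν ∈ 𝔯 such that B_ν^𝔯(z) ⊆ B_r^𝔯(x) ∩ B_s^𝔯(y). -/
noncomputable section

open Set Filter Topology MeasureTheory

/-- A set of radii. -/
structure IsRadiiSet {ρ : ℝ → ℝ} (R : Set (RC ρ ℝ)) : Prop where
  nonempty : R.Nonempty
  posInv : ∀ r ∈ R, RC.PosInv r
  inf_mem : ∀ r ∈ R, ∀ s ∈ R, ∀ a b : ModNet ρ ℝ, RC.mk a = r → RC.mk b = s →
    ∀ hm : Moderate ρ (fun ε => min (a.1 ε) (b.1 ε)), RC.mk ⟨_, hm⟩ ∈ R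
  smul_mem : ∀ r ∈ R, ∀ k : ℝ, 0 < k → ∀ a : ModNet ρ ℝ, RC.mk a = r →
    ∀ hm : Moderate ρ (fun ε => k * a.1 ε), RC.mk ⟨_, hm⟩ ∈ R

/-- The ball `B_r^𝔯(x) = {y : |y - x| <_𝔯 r}`, where `x <_𝔯 y` iff `r ≤ y - x`
for some `r ∈ 𝔯`. -/
def ballRad {ρ : ℝ → ℝ} {E : Type*} [NormedAddCommGroup E] (R : Set (RC ρ ℝ))
    (x : RC ρ E) (r : RC ρ ℝ) : Set (RC ρ E) :=
  {y | ∃ s ∈ R, ∃ a b : ModNet ρ E, ∃ c d : ModNet ρ ℝ,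
    RC.mk a = x ∧ RC.mk b = y ∧ RC.mk c = r ∧ RC.mk d = s ∧
    ∀ ε, II ε → d.1 ε ≤ c.1 ε - ‖b.1 ε - a.1 ε‖}

-- helpers
lemma EvSmall.and {P Q : ℝ → Prop} (hP : EvSmall P) (hQ : EvSmall Q) :
    EvSmall (fun ε => P ε ∧ Q ε) := by
  obtain ⟨a, ha, ha1, hPa⟩ := hP
  obtain ⟨b, hb, hb1, hQb⟩ := hQ
  exact ⟨min a b, lt_min ha hb, le_trans (min_le_left _ _) ha1,
    fun ε hε hε' => ⟨hPa ε hε (hε'.trans (min_le_left _ _)),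
      hQb ε hε (hε'.trans (min_le_right _ _))⟩⟩

lemma EvSmall.mono {P Q : ℝ → Prop} (hP : EvSmall P) (h : ∀ ε, II ε → P ε → Q ε) :
    EvSmall Q := by
  obtain ⟨a, ha, ha1, hPa⟩ := hP
  exact ⟨a, ha, ha1, fun ε hε hε' => h ε ⟨hε, hε'.trans ha1⟩ (hPa ε hε hε')⟩

lemma IsGauge.ev_le_half {ρ : ℝ → ℝ} (hρ : IsGauge ρ) : EvSmall (fun ε => ρ ε ≤ 1/2) := by
  have h : ∀ᶠ ε in nhdsWithin 0 (Set.Ioi 0), ρ ε < 1/2 :=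
    hρ.tendsto_zero.eventually_lt_const (by norm_num)
  rw [eventually_nhdsWithin_iff, Metric.eventually_nhds_iff] at h
  obtain ⟨δ, hδ, hδ'⟩ := h
  refine ⟨min (δ/2) 1, lt_min (by linarith) one_pos, min_le_right _ _, fun ε hε hε' => ?_⟩
  have hd : dist ε 0 < δ := by
    rw [Real.dist_eq, sub_zero, abs_of_pos hε]
    have := hε'.trans (min_le_left _ _); linarith
  exact (hδ' hd hε).le

lemma requiv_refl {ρ : ℝ → ℝ} (hρ : IsGauge ρ) {E : Type*} [NormedAddCommGroup E]
    (x : ℝ → E) : REquiv ρ x x := fun m =>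
  ⟨1, one_pos, le_rfl, fun ε hε hε' => by
    simp [pow_nonneg (hρ.pos ε ⟨hε, hε'⟩).le m]⟩

lemma requiv_symm {ρ : ℝ → ℝ} {E : Type*} [NormedAddCommGroup E] {x y : ℝ → E}
    (h : REquiv ρ x y) : REquiv ρ y x := fun m =>
  (h m).mono fun ε _ hh => by rwa [norm_sub_rev]

lemma requiv_trans {ρ : ℝ → ℝ} (hρ : IsGauge ρ) {E : Type*} [NormedAddCommGroup E]
    {x y z : ℝ → E} (h1 : REquiv ρ x y) (h2 : REquiv ρ y z) : REquiv ρ x z := by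
  intro m
  refine (((h1 (m+1)).and (h2 (m+1))).and hρ.ev_le_half).mono fun ε hε ⟨⟨ha, hb⟩, hc⟩ => ?_
  have hp := hρ.pos ε hε
  have he : x ε - z ε = (x ε - y ε) + (y ε - z ε) := by abel
  have := norm_add_le (x ε - y ε) (y ε - z ε)
  have hps : ρ ε ^ (m+1) = ρ ε ^ m * ρ ε := pow_succ _ _
  nlinarith [pow_nonneg hp.le m, norm_nonneg (x ε - z ε), he ▸ this]

lemma mk_eq_iff {ρ : ℝ → ℝ} (hρ : IsGauge ρ) {E : Type*} [NormedAddCommGroup E]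
    {a b : ModNet ρ E} : RC.mk a = RC.mk b ↔ REquiv ρ a.1 b.1 := by
  unfold RC.mk
  change @Eq (Quot (fun x y : ModNet ρ E => REquiv ρ x.1 y.1)) _ _ ↔ _
  rw [Quot.eq]
  exact Equivalence.eqvGen_iff
    ⟨fun x => requiv_refl hρ _, fun h => requiv_symm h, fun h1 h2 => requiv_trans hρ h1 h2⟩

lemma my_inv_pow_anti {p : ℝ} (hp : 0 < p) (hp1 : p ≤ 1) {a b : ℕ} (h : a ≤ b) :
    (p ^ a)⁻¹ ≤ (p ^ b)⁻¹ :=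
  inv_anti₀ (pow_pos hp b) (pow_le_pow_of_le_one hp.le hp1 h)

lemma moderate_triple {ρ : ℝ → ℝ} (hρ : IsGauge ρ) {E : Type*} [NormedAddCommGroup E]
    {E' : Type*} [NormedAddCommGroup E'] {g : ℝ → ℝ} {u v : ℝ → E} {w : ℝ → E'}
    (hu : Moderate ρ u) (hv : Moderate ρ v) (hw : Moderate ρ w)
    (hg : ∀ ε, II ε → |g ε| ≤ ‖u ε‖ + ‖v ε‖ + ‖w ε‖) : Moderate ρ g := by
  obtain ⟨N, hN⟩ := hu; obtain ⟨M, hM⟩ := hv; obtain ⟨L, hL⟩ := hw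
  refine ⟨max N (max M L) + 2, ?_⟩
  refine (((hN.and hM).and hL).and hρ.ev_le_half).mono fun ε hε ⟨⟨⟨h1, h2⟩, h3⟩, h4⟩ => ?_
  have hp := hρ.pos ε hε
  have hp1 := hρ.le_one ε hε
  set K := max N (max M L) with hK
  simp only [zpow_neg, zpow_natCast] at h1 h2 h3 ⊢
  have b1 : ‖u ε‖ ≤ (ρ ε ^ K)⁻¹ := h1.trans (my_inv_pow_anti hp hp1 (le_max_left _ _))
  have b2 : ‖v ε‖ ≤ (ρ ε ^ K)⁻¹ :=
    h2.trans (my_inv_pow_anti hp hp1 ((le_max_left _ _).trans (le_max_right _ _)))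
  have b3 : ‖w ε‖ ≤ (ρ ε ^ K)⁻¹ :=
    h3.trans (my_inv_pow_anti hp hp1 ((le_max_right _ _).trans (le_max_right _ _)))
  have hKpos : (0:ℝ) < ρ ε ^ K := pow_pos hp K
  have key : 3 * (ρ ε ^ K)⁻¹ ≤ (ρ ε ^ (K+2))⁻¹ := by
    rw [pow_add, mul_inv]
    have h5 : (3:ℝ) ≤ (ρ ε ^ 2)⁻¹ := by
      have : ρ ε ^ 2 ≤ 1/3 := by nlinarith
      calc (3:ℝ) = (1/3:ℝ)⁻¹ := by norm_num
        _ ≤ (ρ ε ^ 2)⁻¹ := inv_anti₀ (pow_pos hp 2) this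
    calc 3 * (ρ ε ^ K)⁻¹ ≤ (ρ ε ^ 2)⁻¹ * (ρ ε ^ K)⁻¹ :=
          mul_le_mul_of_nonneg_right h5 (inv_nonneg.mpr hKpos.le)
      _ = (ρ ε ^ K)⁻¹ * (ρ ε ^ 2)⁻¹ := by ring
  have := hg ε hε
  rw [Real.norm_eq_abs]
  linarith

lemma moderate_min {ρ : ℝ → ℝ} (hρ : IsGauge ρ) {a b : ℝ → ℝ}
    (ha : Moderate ρ a) (hb : Moderate ρ b) :
    Moderate ρ (fun ε => min (a ε) (b ε)) := by
  refine moderate_triple hρ ha hb (⟨0, 1, one_pos, le_rfl, fun ε _ _ => by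
    simpa using (zpow_nonneg (le_of_lt (by norm_num : (0:ℝ) < 1)) _)⟩ :
      Moderate ρ (fun _ : ℝ => (0:ℝ))) fun ε hε => ?_
  rcases le_total (a ε) (b ε) with h | h
  · simp only [min_eq_left h, Real.norm_eq_abs, norm_zero]
    have := abs_nonneg (b ε); linarith [le_abs_self (a ε), abs_nonneg (a ε)]
  · simp only [min_eq_right h, Real.norm_eq_abs, norm_zero]
    have := abs_nonneg (a ε); linarith [le_abs_self (b ε), abs_nonneg (b ε)]

lemma posInv_rep_lb {ρ : ℝ → ℝ} (hρ : IsGauge ρ) {t : RC ρ ℝ} (ht : RC.PosInv t)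
    (d : ModNet ρ ℝ) (hd : RC.mk d = t) :
    ∃ K : ℕ, EvSmall (fun ε => ρ ε ^ K ≤ d.1 ε) := by
  obtain ⟨⟨a, ha, b, hbmod, hab⟩, hle⟩ := ht
  obtain ⟨p, q, hp0, hqt, hpq⟩ := hle
  have hp0' : REquiv ρ p.1 (fun _ => (0:ℝ)) :=
    (mk_eq_iff hρ).mp (hp0 : RC.mk p = RC.mk (⟨fun _ => 0, moderate_const_zero ρ⟩ : ModNet ρ ℝ))
  have haq : REquiv ρ a.1 q.1 := (mk_eq_iff hρ).mp (ha.trans hqt.symm)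
  have hqd : REquiv ρ q.1 d.1 := (mk_eq_iff hρ).mp (hqt.trans hd.symm)
  obtain ⟨N, hN⟩ := hbmod
  refine ⟨N + 3, ?_⟩
  refine ((((hab 1).and hN).and ((haq (N+4)).and (hqd (N+4)))).and
    ((hp0' (N+4)).and hρ.ev_le_half)).mono fun ε hε ⟨⟨⟨h1, h2⟩, h3, h4⟩, h5, h6⟩ => ?_
  have hεp := hε
  have hp' := hρ.pos ε hε
  have hp1 := hρ.le_one ε hε
  rw [pow_one, Real.norm_eq_abs] at h1
  rw [zpow_neg, zpow_natCast, Real.norm_eq_abs] at h2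
  rw [Real.norm_eq_abs] at h3 h4
  rw [Real.norm_eq_abs, sub_zero] at h5
  have hPQ := hpq ε hε
  -- step 1: |a ε| ≥ ρ^{N+1}
  have hb1 : |b ε| * ρ ε ^ N ≤ 1 := by
    rw [← le_div_iff₀ (pow_pos hp' N), div_eq_mul_inv, one_mul]; exact h2
  have h1' : |a.1 ε * b ε - 1| ≤ ρ ε := h1
  have habs : 1 - ρ ε ≤ |a.1 ε| * |b ε| := by
    have k := abs_sub_abs_le_abs_sub (1:ℝ) (a.1 ε * b ε)
    rw [abs_one, abs_sub_comm, abs_mul] at k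
    linarith
  have hstep1 : ρ ε ^ (N+1) ≤ |a.1 ε| := by
    have k1 : |a.1 ε| * (|b ε| * ρ ε ^ N) ≤ |a.1 ε| * 1 :=
      mul_le_mul_of_nonneg_left hb1 (abs_nonneg _)
    have k2 : (1 - ρ ε) * ρ ε ^ N ≤ |a.1 ε| * |b ε| * ρ ε ^ N :=
      mul_le_mul_of_nonneg_right habs (pow_nonneg hp'.le N)
    have k3 : ρ ε ^ (N+1) = ρ ε ^ N * ρ ε := pow_succ _ _
    nlinarith [pow_nonneg hp'.le N, mul_le_mul_of_nonneg_right h6 (pow_nonneg hp'.le N)]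
  -- power comparisons
  have e4 : ρ ε ^ (N+4) ≤ ρ ε ^ (N+1) * (1/8) := by
    have k : ρ ε ^ (N+4) = ρ ε ^ (N+1) * ρ ε ^ 3 := by ring
    rw [k]
    refine mul_le_mul_of_nonneg_left ?_ (pow_nonneg hp'.le _)
    calc ρ ε ^ 3 ≤ (1/2:ℝ) ^ 3 := pow_le_pow_left₀ hp'.le h6 3
      _ = 1/8 := by norm_num
  have e3 : ρ ε ^ (N+3) ≤ ρ ε ^ (N+1) * (1/4) := by
    have k : ρ ε ^ (N+3) = ρ ε ^ (N+1) * ρ ε ^ 2 := by ring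
    rw [k]
    refine mul_le_mul_of_nonneg_left ?_ (pow_nonneg hp'.le _)
    calc ρ ε ^ 2 ≤ (1/2:ℝ) ^ 2 := pow_le_pow_left₀ hp'.le h6 2
      _ = 1/4 := by norm_num
  have hs : (0:ℝ) < ρ ε ^ (N+1) := pow_pos hp' _
  -- |q| ≥ s(1 - 1/8), q ≥ -s/8, hence q ≥ 6s/8, d ≥ q - s/8 ≥ s/4 ≥ ρ^{N+3}
  have hqabs : |a.1 ε| - |q.1 ε| ≤ |a.1 ε - q.1 ε| := abs_sub_abs_le_abs_sub _ _
  have hqlb : -(ρ ε ^ (N+1) * (1/8)) ≤ q.1 ε := by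
    have := (abs_le.mp h5).1
    linarith
  have hdq := (abs_le.mp h4).2
  rcases abs_cases (q.1 ε) with ⟨hq1, hq2⟩ | ⟨hq1, hq2⟩
  · linarith
  · linarith

lemma rep_patch {ρ : ℝ → ℝ} (hρ : IsGauge ρ) (e : ModNet ρ ℝ) (g : ℝ → ℝ)
    (hg : Moderate ρ g) (hsm : EvSmall (fun ε => e.1 ε ≤ g ε)) :
    ∃ e' : ModNet ρ ℝ, RC.mk e' = RC.mk e ∧ ∀ ε, II ε → e'.1 ε ≤ g ε := by
  have hmod : Moderate ρ (fun ε => min (e.1 ε) (g ε)) := moderate_min hρ e.2 hg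
  refine ⟨⟨_, hmod⟩, ?_, fun ε hε => min_le_right _ _⟩
  rw [mk_eq_iff hρ]
  intro m
  refine hsm.mono fun ε hε h => ?_
  simp only [min_eq_left h, sub_self, norm_zero]
  exact pow_nonneg (hρ.pos ε hε).le m

lemma my_ball_sub {ρ : ℝ → ℝ} (hρ : IsGauge ρ) {E : Type*} [NormedAddCommGroup E]
    (R : Set (RC ρ ℝ)) (hR : IsRadiiSet R) {x z : RC ρ E} {r ν : RC ρ ℝ}
    (hν : ν ∈ R) (e : ModNet ρ ℝ) (he : RC.mk e = ν)
    (a₁ b₁ : ModNet ρ E) (c₁ d₁ : ModNet ρ ℝ)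
    (hx : RC.mk a₁ = x) (hz : RC.mk b₁ = z) (hc : RC.mk c₁ = r)
    (H₁ : ∀ ε, II ε → d₁.1 ε ≤ c₁.1 ε - ‖b₁.1 ε - a₁.1 ε‖)
    (hee : ∀ ε, II ε → 2 * e.1 ε ≤ d₁.1 ε) :
    ballRad R z ν ⊆ ballRad R x r := by
  rintro w ⟨t, htR, a₃, b₃, c₃, d₃, hza, hwb, hνc, htd, H₃⟩
  obtain ⟨K, hK⟩ := posInv_rep_lb hρ (hR.posInv t htR) d₃ htd
  have hab : REquiv ρ a₃.1 b₁.1 := (mk_eq_iff hρ).mp (hza.trans hz.symm)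
  have hce : REquiv ρ c₃.1 e.1 := (mk_eq_iff hρ).mp (hνc.trans he.symm)
  have hsm : EvSmall (fun ε => e.1 ε ≤ c₁.1 ε - ‖b₃.1 ε - a₁.1 ε‖) := by
    refine (((hab (K+2)).and (hce (K+2))).and (hK.and hρ.ev_le_half)).mono
      fun ε hε ⟨⟨h1, h2⟩, h3, h4⟩ => ?_
    have hp := hρ.pos ε hε
    have tri : ‖b₃.1 ε - a₁.1 ε‖ ≤
        ‖b₃.1 ε - a₃.1 ε‖ + ‖a₃.1 ε - b₁.1 ε‖ + ‖b₁.1 ε - a₁.1 ε‖ := by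
      have k : b₃.1 ε - a₁.1 ε =
          (b₃.1 ε - a₃.1 ε) + (a₃.1 ε - b₁.1 ε) + (b₁.1 ε - a₁.1 ε) := by abel
      rw [k]; exact norm_add₃_le
    have h2' : c₃.1 ε ≤ e.1 ε + ρ ε ^ (K+2) := by
      have := (abs_le.mp (by rwa [Real.norm_eq_abs] at h2)).2
      linarith
    have hpow : 2 * ρ ε ^ (K+2) ≤ ρ ε ^ K := by
      have k : ρ ε ^ (K+2) = ρ ε ^ K * (ρ ε * ρ ε) := by ring
      have k2 : ρ ε * ρ ε ≤ 1/4 := by nlinarith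
      have k3 : ρ ε ^ K * (ρ ε * ρ ε) ≤ ρ ε ^ K * (1/4) :=
        mul_le_mul_of_nonneg_left k2 (pow_nonneg hp.le K)
      nlinarith [pow_nonneg hp.le K]
    have h1' : ‖a₃.1 ε - b₁.1 ε‖ ≤ ρ ε ^ (K+2) := h1
    linarith [H₁ ε hε, H₃ ε hε, hee ε hε]
  have hgmod : Moderate ρ (fun ε => c₁.1 ε - ‖b₃.1 ε - a₁.1 ε‖) := by
    refine moderate_triple hρ b₃.2 a₁.2 c₁.2 fun ε hε => ?_
    have t1 := abs_sub (c₁.1 ε) (‖b₃.1 ε - a₁.1 ε‖)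
    have t2 : |‖b₃.1 ε - a₁.1 ε‖| = ‖b₃.1 ε - a₁.1 ε‖ := abs_norm _
    have t3 := norm_sub_le (b₃.1 ε) (a₁.1 ε)
    have t4 := le_abs_self (c₁.1 ε)
    calc |c₁.1 ε - ‖b₃.1 ε - a₁.1 ε‖| ≤ |c₁.1 ε| + |‖b₃.1 ε - a₁.1 ε‖| := abs_sub _ _
      _ ≤ ‖b₃.1 ε‖ + ‖a₁.1 ε‖ + ‖c₁.1 ε‖ := by
          rw [t2, Real.norm_eq_abs]; linarith
  obtain ⟨e', he', hle⟩ := rep_patch hρ e _ hgmod hsm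
  exact ⟨ν, hν, a₁, b₃, c₁, e', hx, hwb, hc, he'.trans he, hle⟩

/-- the balls generated by a set of radii form a base for a topology on
`⟨ρ⟩ℝⁿ` (Theorem `thm:intersectionBalls`). -/
theorem stmt_1 {ρ : ℝ → ℝ} (hρ : IsGauge ρ) {n : ℕ} (R : Set (RC ρ ℝ))
    (hR : IsRadiiSet R) (x y z : RC ρ (RVec n)) (r s : RC ρ ℝ)
    (hr : r ∈ R) (hs : s ∈ R)
    (hz : z ∈ ballRad R x r ∩ ballRad R y s) :
    ∃ ν ∈ R, ballRad R z ν ⊆ ballRad R x r ∩ ballRad R y s := by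
  obtain ⟨⟨s₁, hs₁, a₁, b₁, c₁, d₁, hxa, hzb, hrc, hds₁, H₁⟩,
    s₂, hs₂, a₂, b₂, c₂, d₂, hya, hzb₂, hsc, hds₂, H₂⟩ := hz
  have hminmod : Moderate ρ (fun ε => min (d₁.1 ε) (d₂.1 ε)) := moderate_min hρ d₁.2 d₂.2
  have hm : RC.mk ⟨_, hminmod⟩ ∈ R := hR.inf_mem _ hs₁ _ hs₂ d₁ d₂ hds₁ hds₂ hminmod
  have hemod : Moderate ρ (fun ε => (1/2 : ℝ) * min (d₁.1 ε) (d₂.1 ε)) := by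
    obtain ⟨N, hN⟩ := hminmod
    refine ⟨N, hN.mono fun ε hε h => ?_⟩
    have : ‖(1/2 : ℝ) * min (d₁.1 ε) (d₂.1 ε)‖ ≤ ‖min (d₁.1 ε) (d₂.1 ε)‖ := by
      rw [norm_mul]
      have := norm_nonneg (min (d₁.1 ε) (d₂.1 ε))
      rw [Real.norm_eq_abs (1/2 : ℝ)]
      have k : |(1/2 : ℝ)| = 1/2 := by norm_num
      rw [k]; linarith
    exact this.trans h
  have hν : RC.mk ⟨_, hemod⟩ ∈ R := hR.smul_mem _ hm (1/2) (by norm_num) _ rfl hemod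
  refine ⟨RC.mk ⟨_, hemod⟩, hν, fun w hw => ?_⟩
  constructor
  · refine my_ball_sub hρ R hR hν _ rfl a₁ b₁ c₁ d₁ hxa hzb hrc H₁ (fun ε hε => ?_) hw
    have hmin := min_le_left (d₁.1 ε) (d₂.1 ε)
    show 2 * ((1/2 : ℝ) * min (d₁.1 ε) (d₂.1 ε)) ≤ d₁.1 ε
    linarith
  · refine my_ball_sub hρ R hR hν _ rfl a₂ b₂ c₂ d₂ hya hzb₂ hsc H₂ (fun ε hε => ?_) hw
    have hmin := min_le_right (d₁.1 ε) (d₂.1 ε)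
    show 2 * ((1/2 : ℝ) * min (d₁.1 ε) (d₂.1 ε)) ≤ d₂.1 ε
    linarith
end
end

section
/- Let X ⊆ ⟨ρ⟩ℝⁿ and Y ⊆ ⟨ρ⟩ℝ^d, let (Ω_ε) be a net of open subsets of ℝⁿ, and let f_ε ∈ C^∞(Ω_ε, ℝ^d) be a net of smooth functions that defines a generalized smooth map of type X → Y. Then for every multi-index α ∈ ℕⁿ and all ρ-moderate nets (x_ε), (x'_ε) of points of ℝⁿ with [x_ε] = [x'_ε] ∈ X, the nets (∂^α f_ε(x_ε)) and (∂^α f_ε(x'_ε)) are ρ-equivalent; in particular [x_ε] ∈ X ↦ [∂^α f_ε(x_ε)] ∈ ⟨ρ⟩ℝ^d is a well-defined map. -/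
noncomputable section

open Set Filter Topology MeasureTheory

/-! ### Auxiliary material for `stmt_4` -/

namespace Stmt4Aux

open Filter Set

/-- smoothness exponent we work with -/
abbrev sm : WithTop ℕ∞ := ((⊤ : ℕ∞) : WithTop ℕ∞)

lemma sm_add_one : sm + 1 ≤ sm := by
  simp [sm]

lemma one_le_sm : 1 ≤ sm := by
  show ((1:ℕ∞) : WithTop ℕ∞) ≤ ((⊤:ℕ∞) : WithTop ℕ∞)
  exact_mod_cast le_top

lemma two_le_sm : 2 ≤ sm := by
  show ((2:ℕ∞) : WithTop ℕ∞) ≤ ((⊤:ℕ∞) : WithTop ℕ∞)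
  exact_mod_cast le_top

lemma evSmall_iff {P : ℝ → Prop} : EvSmall P ↔ ∀ᶠ ε in 𝓝[>] (0:ℝ), P ε := by
  constructor
  · rintro ⟨ε₀, h0, _, h⟩
    filter_upwards [Ioc_mem_nhdsGT_of_mem (⟨le_rfl, h0⟩ : (0:ℝ) ∈ Set.Ico 0 ε₀)] with ε hε
    exact h ε hε.1 hε.2
  · intro h
    rcases mem_nhdsGT_iff_exists_Ioc_subset.1 h with ⟨u, hu, hsub⟩
    exact ⟨min u 1, lt_min hu one_pos, min_le_right _ _,
      fun ε hε hε' => hsub ⟨hε, hε'.trans (min_le_left _ _)⟩⟩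

lemma ev_II : ∀ᶠ ε in 𝓝[>] (0:ℝ), II ε := by
  filter_upwards [Ioc_mem_nhdsGT_of_mem (⟨le_rfl, one_pos⟩ : (0:ℝ) ∈ Set.Ico 0 1)] with ε hε
  exact ⟨hε.1, hε.2⟩

lemma ev_rho_pos {ρ : ℝ → ℝ} (hρ : IsGauge ρ) : ∀ᶠ ε in 𝓝[>] (0:ℝ), 0 < ρ ε :=
  ev_II.mono fun ε h => hρ.pos ε h

lemma ev_rho_le_one {ρ : ℝ → ℝ} (hρ : IsGauge ρ) : ∀ᶠ ε in 𝓝[>] (0:ℝ), ρ ε ≤ 1 :=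
  ev_II.mono fun ε h => hρ.le_one ε h

lemma ev_rho_le {ρ : ℝ → ℝ} (hρ : IsGauge ρ) {δ : ℝ} (hδ : 0 < δ) :
    ∀ᶠ ε in 𝓝[>] (0:ℝ), ρ ε ≤ δ := by
  have := hρ.tendsto_zero.eventually (gt_mem_nhds hδ)
  exact this.mono fun ε h => le_of_lt h

lemma requiv_equivalence {ρ : ℝ → ℝ} (hρ : IsGauge ρ) {E : Type*} [NormedAddCommGroup E] :
    Equivalence (fun x y : ModNet ρ E => REquiv ρ x.1 y.1) := by
  constructor
  · intro x m
    refine evSmall_iff.2 ?_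
    filter_upwards [ev_rho_pos hρ] with ε hε
    simp [pow_nonneg (le_of_lt hε)]
  · intro x y h m
    refine evSmall_iff.2 ?_
    filter_upwards [evSmall_iff.1 (h m)] with ε hε
    rwa [norm_sub_rev]
  · intro x y z hxy hyz m
    refine evSmall_iff.2 ?_
    filter_upwards [evSmall_iff.1 (hxy (m+1)), evSmall_iff.1 (hyz (m+1)),
      ev_rho_pos hρ, ev_rho_le hρ (by norm_num : (0:ℝ) < 1/2)] with ε h1 h2 h3 h4
    calc ‖x.1 ε - z.1 ε‖ ≤ ‖x.1 ε - y.1 ε‖ + ‖y.1 ε - z.1 ε‖ := by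
          simpa using norm_add_le (x.1 ε - y.1 ε) (y.1 ε - z.1 ε)
      _ ≤ ρ ε ^ (m+1) + ρ ε ^ (m+1) := add_le_add h1 h2
      _ = 2 * ρ ε * ρ ε ^ m := by ring
      _ ≤ 1 * ρ ε ^ m := by
          apply mul_le_mul_of_nonneg_right (by linarith) (pow_nonneg h3.le m)
      _ = ρ ε ^ m := one_mul _

lemma rc_eq_iff {ρ : ℝ → ℝ} (hρ : IsGauge ρ) {E : Type*} [NormedAddCommGroup E]
    {a b : ModNet ρ E} : RC.mk a = RC.mk b ↔ REquiv ρ a.1 b.1 := by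
  constructor
  · intro h
    exact (requiv_equivalence hρ).eqvGen_iff.mp (Quot.eqvGen_exact h)
  · intro h
    exact Quot.sound h

lemma norm_le_of_mem_segment {E : Type*} [NormedAddCommGroup E] [NormedSpace ℝ E]
    {u v q : E} (h : q ∈ segment ℝ u v) : ‖q‖ ≤ max ‖u‖ ‖v‖ := by
  have hu : u ∈ Metric.closedBall (0:E) (max ‖u‖ ‖v‖) := by
    simp [Metric.mem_closedBall, dist_zero_right, le_max_left]
  have hv : v ∈ Metric.closedBall (0:E) (max ‖u‖ ‖v‖) := by
    simp [Metric.mem_closedBall, dist_zero_right, le_max_right]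
  have := (convex_closedBall (0:E) (max ‖u‖ ‖v‖)).segment_subset hu hv h
  simpa [Metric.mem_closedBall, dist_zero_right] using this

lemma norm_sub_left_of_mem_segment {E : Type*} [NormedAddCommGroup E] [NormedSpace ℝ E]
    {u v q : E} (h : q ∈ segment ℝ u v) : ‖q - u‖ ≤ ‖v - u‖ := by
  have hu : u ∈ Metric.closedBall u ‖v - u‖ := by
    simp [Metric.mem_closedBall, norm_nonneg]
  have hv : v ∈ Metric.closedBall u ‖v - u‖ := by
    simp [Metric.mem_closedBall, dist_eq_norm]
  have := (convex_closedBall u ‖v - u‖).segment_subset hu hv h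
  simpa [Metric.mem_closedBall, dist_eq_norm] using this

lemma isCompact_segment' {E : Type*} [NormedAddCommGroup E] [NormedSpace ℝ E] (u v : E) :
    IsCompact (segment ℝ u v) := by
  rw [← convexHull_pair]
  exact ((Set.finite_singleton v).insert u).isCompact_convexHull ℝ

section Derivs

variable {n : ℕ} {F : Type*} [NormedAddCommGroup F] [NormedSpace ℝ F]

lemma pderivI_congrOn {U : Set (RVec n)} (hU : IsOpen U) {h₁ h₂ : RVec n → F}
    (h : Set.EqOn h₁ h₂ U) (i : Fin n) : Set.EqOn (pderivI i h₁) (pderivI i h₂) U := by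
  intro x hx
  unfold pderivI
  rw [Filter.EventuallyEq.fderiv_eq (Filter.eventuallyEq_of_mem (hU.mem_nhds hx) h)]

lemma pderivI_iter_congrOn {U : Set (RVec n)} (hU : IsOpen U) {h₁ h₂ : RVec n → F}
    (h : Set.EqOn h₁ h₂ U) (i : Fin n) (k : ℕ) :
    Set.EqOn ((pderivI i)^[k] h₁) ((pderivI i)^[k] h₂) U := by
  induction k generalizing h₁ h₂ with
  | zero => exact h
  | succ k ih =>
      rw [Function.iterate_succ_apply, Function.iterate_succ_apply]
      exact ih (pderivI_congrOn hU h i)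

lemma pderivI_contDiffOn {U : Set (RVec n)} (hU : IsOpen U) {h : RVec n → F}
    (hh : ContDiffOn ℝ sm h U) (i : Fin n) : ContDiffOn ℝ sm (pderivI i h) U := by
  have h1 : ContDiffOn ℝ sm (fderiv ℝ h) U := hh.fderiv_of_isOpen hU sm_add_one
  exact h1.clm_apply contDiffOn_const

lemma pderivI_iter_contDiffOn {U : Set (RVec n)} (hU : IsOpen U) {h : RVec n → F}
    (hh : ContDiffOn ℝ sm h U) (i : Fin n) (k : ℕ) :
    ContDiffOn ℝ sm ((pderivI i)^[k] h) U := by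
  induction k generalizing h with
  | zero => exact hh
  | succ k ih =>
      rw [Function.iterate_succ_apply]
      exact ih (pderivI_contDiffOn hU hh i)

/-- abbreviation for the foldr in `pderivM` over a general list -/
def PM (α : Fin n → ℕ) (L : List (Fin n)) (h : RVec n → F) : RVec n → F :=
  L.foldr (fun i g => (pderivI i)^[α i] g) h

lemma pderivM_eq_PM (α : Fin n → ℕ) (h : RVec n → F) :
    pderivM α h = PM α (List.finRange n) h := rfl

lemma PM_contDiffOn (α : Fin n → ℕ) (L : List (Fin n)) {U : Set (RVec n)} (hU : IsOpen U)
    {h : RVec n → F} (hh : ContDiffOn ℝ sm h U) : ContDiffOn ℝ sm (PM α L h) U := by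
  induction L with
  | nil => exact hh
  | cons j L ih => exact pderivI_iter_contDiffOn hU ih j (α j)

lemma PM_congrOn (α : Fin n → ℕ) (L : List (Fin n)) {U : Set (RVec n)} (hU : IsOpen U)
    {h₁ h₂ : RVec n → F} (h : Set.EqOn h₁ h₂ U) : Set.EqOn (PM α L h₁) (PM α L h₂) U := by
  induction L with
  | nil => exact h
  | cons j L ih => exact pderivI_iter_congrOn hU ih j (α j)

lemma PM_congr_index {α β : Fin n → ℕ} (L : List (Fin n)) (hαβ : ∀ j ∈ L, β j = α j)
    (h : RVec n → F) : PM β L h = PM α L h := by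
  induction L with
  | nil => rfl
  | cons j L ih =>
      show (pderivI j)^[β j] (PM β L h) = (pderivI j)^[α j] (PM α L h)
      rw [hαβ j List.mem_cons_self, ih (fun j' hj' => hαβ j' (List.mem_cons_of_mem j hj'))]

lemma pderivI_comm {U : Set (RVec n)} (hU : IsOpen U) {h : RVec n → F}
    (hh : ContDiffOn ℝ sm h U) (i j : Fin n) :
    Set.EqOn (pderivI i (pderivI j h)) (pderivI j (pderivI i h)) U := by
  intro x hx
  have hx' : ContDiffAt ℝ sm h x := hh.contDiffAt (hU.mem_nhds hx)
  have hsymm : IsSymmSndFDerivAt ℝ h x := hx'.isSymmSndFDerivAt (by rw [minSmoothness_of_isRCLikeNormedField]; exact two_le_sm)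
  have hdiff : DifferentiableAt ℝ (fderiv ℝ h) x :=
    ((hh.fderiv_of_isOpen hU sm_add_one).contDiffAt (hU.mem_nhds hx)).differentiableAt (by simp [sm])
  have key : ∀ v w : RVec n,
      fderiv ℝ (fun y => fderiv ℝ h y w) x v = fderiv ℝ (fderiv ℝ h) x v w := by
    intro v w
    have hcomp := ((ContinuousLinearMap.apply ℝ F w).hasFDerivAt.comp x
      hdiff.hasFDerivAt).fderiv
    have : fderiv ℝ (fun y => fderiv ℝ h y w) x =
        (ContinuousLinearMap.apply ℝ F w).comp (fderiv ℝ (fderiv ℝ h) x) := hcomp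
    rw [this]
    rfl
  show fderiv ℝ (fun y => fderiv ℝ h y (EuclideanSpace.single j 1)) x (EuclideanSpace.single i 1)
      = fderiv ℝ (fun y => fderiv ℝ h y (EuclideanSpace.single i 1)) x (EuclideanSpace.single j 1)
  rw [key, key]
  exact hsymm _ _

lemma pderivI_comm_iter {U : Set (RVec n)} (hU : IsOpen U) {h : RVec n → F}
    (hh : ContDiffOn ℝ sm h U) (i j : Fin n) (k : ℕ) :
    Set.EqOn (pderivI i ((pderivI j)^[k] h)) ((pderivI j)^[k] (pderivI i h)) U := by
  induction k generalizing h with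
  | zero => intro x hx; rfl
  | succ k ih =>
      rw [Function.iterate_succ_apply, Function.iterate_succ_apply]
      have h1 : Set.EqOn (pderivI i ((pderivI j)^[k] (pderivI j h)))
          ((pderivI j)^[k] (pderivI i (pderivI j h))) U := ih (pderivI_contDiffOn hU hh j)
      refine h1.trans ?_
      exact pderivI_iter_congrOn hU (pderivI_comm hU hh i j) j k

lemma pderivI_PM_comm (α : Fin n → ℕ) (L : List (Fin n)) {U : Set (RVec n)} (hU : IsOpen U)
    {h : RVec n → F} (hh : ContDiffOn ℝ sm h U) (i : Fin n) :
    Set.EqOn (pderivI i (PM α L h)) (PM α L (pderivI i h)) U := by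
  induction L with
  | nil => intro x hx; rfl
  | cons j L ih =>
      show Set.EqOn (pderivI i ((pderivI j)^[α j] (PM α L h))) _ U
      refine (pderivI_comm_iter hU (PM_contDiffOn α L hU hh) i j (α j)).trans ?_
      exact pderivI_iter_congrOn hU ih j (α j)

lemma PM_update (α : Fin n → ℕ) (i : Fin n) (L : List (Fin n)) (hnd : L.Nodup)
    {U : Set (RVec n)} (hU : IsOpen U) {h : RVec n → F} (hh : ContDiffOn ℝ sm h U)
    (hiL : i ∈ L) :
    Set.EqOn (PM (Function.update α i (α i + 1)) L h) (PM α L (pderivI i h)) U := by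
  induction L with
  | nil => exact absurd hiL List.not_mem_nil
  | cons j L ih =>
      rcases List.mem_cons.1 hiL with hji | hiL'
      · subst hji
        have hiL2 : i ∉ L := (List.nodup_cons.1 hnd).1
        show Set.EqOn ((pderivI i)^[Function.update α i (α i + 1) i]
            (PM (Function.update α i (α i + 1)) L h)) ((pderivI i)^[α i] (PM α L (pderivI i h))) U
        rw [Function.update_self]
        rw [PM_congr_index (β := Function.update α i (α i + 1)) L
          (fun j' hj' => Function.update_of_ne (by rintro rfl; exact hiL2 hj') _ _) h]
        rw [Function.iterate_succ_apply]
        exact pderivI_iter_congrOn hU (pderivI_PM_comm α L hU hh i) i (α i)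
      · have hji : j ≠ i := by
          rintro rfl
          exact (List.nodup_cons.1 hnd).1 hiL'
        show Set.EqOn ((pderivI j)^[Function.update α i (α i + 1) j]
            (PM (Function.update α i (α i + 1)) L h)) ((pderivI j)^[α j] (PM α L (pderivI i h))) U
        rw [Function.update_of_ne hji]
        exact pderivI_iter_congrOn hU (ih (List.nodup_cons.1 hnd).2 hiL') j (α j)

/-- The key identity: `∂ᵢ (∂^α h) = ∂^{α + eᵢ} h` on an open set of smoothness. -/
lemma pderivI_pderivM (α : Fin n → ℕ) (i : Fin n) {U : Set (RVec n)} (hU : IsOpen U)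
    {h : RVec n → F} (hh : ContDiffOn ℝ sm h U) :
    Set.EqOn (pderivI i (pderivM α h)) (pderivM (Function.update α i (α i + 1)) h) U := by
  rw [pderivM_eq_PM, pderivM_eq_PM]
  exact (pderivI_PM_comm α (List.finRange n) hU hh i).trans
    (PM_update α i (List.finRange n) (List.nodup_finRange n) hU hh (List.mem_finRange i)).symm

lemma pderivM_contDiffOn (α : Fin n → ℕ) {U : Set (RVec n)} (hU : IsOpen U)
    {h : RVec n → F} (hh : ContDiffOn ℝ sm h U) : ContDiffOn ℝ sm (pderivM α h) U := by
  rw [pderivM_eq_PM]; exact PM_contDiffOn α _ hU hh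

lemma abs_coord_le_norm (x : RVec n) (i : Fin n) : |x i| ≤ ‖x‖ := by
  rw [EuclideanSpace.norm_eq]
  rw [Real.le_sqrt (abs_nonneg _) (Finset.sum_nonneg fun j _ => sq_nonneg _)]
  rw [sq_abs]
  have : x i ^ 2 = ‖x i‖ ^ 2 := by rw [Real.norm_eq_abs, sq_abs]
  rw [this]
  exact Finset.single_le_sum (fun j _ => sq_nonneg ‖x j‖) (Finset.mem_univ i)

lemma eucl_sum_single (x : RVec n) : ∑ i, (x i) • EuclideanSpace.single i (1:ℝ) = x := by
  simpa [EuclideanSpace.basisFun_apply, EuclideanSpace.basisFun_repr] using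
    (EuclideanSpace.basisFun (Fin n) ℝ).sum_repr x

lemma opNorm_le_sum (L : RVec n →L[ℝ] F) :
    ‖L‖ ≤ ∑ i, ‖L (EuclideanSpace.single i 1)‖ := by
  refine ContinuousLinearMap.opNorm_le_bound _
    (Finset.sum_nonneg fun i _ => norm_nonneg _) fun x => ?_
  have hx : L x = ∑ i, (x i) • L (EuclideanSpace.single i 1) := by
    conv_lhs => rw [← eucl_sum_single x]
    rw [map_sum]
    simp only [ContinuousLinearMap.map_smul]
  rw [hx]
  calc ‖∑ i, (x i) • L (EuclideanSpace.single i 1)‖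
      ≤ ∑ i, ‖(x i) • L (EuclideanSpace.single i 1)‖ := norm_sum_le _ _
    _ ≤ ∑ i, ‖L (EuclideanSpace.single i 1)‖ * ‖x‖ := by
        refine Finset.sum_le_sum fun i _ => ?_
        rw [norm_smul, Real.norm_eq_abs, mul_comm]
        exact mul_le_mul_of_nonneg_left (abs_coord_le_norm x i) (norm_nonneg _)
    _ = (∑ i, ‖L (EuclideanSpace.single i 1)‖) * ‖x‖ := (Finset.sum_mul _ _ _).symm

lemma mvt {g : RVec n → F} {U : Set (RVec n)} (hU : IsOpen U)
    (hg : ContDiffOn ℝ sm g U) {u v : RVec n} (hseg : segment ℝ u v ⊆ U) {C : ℝ}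
    (hC : ∀ x ∈ segment ℝ u v, ‖fderiv ℝ g x‖ ≤ C) : ‖g v - g u‖ ≤ C * ‖v - u‖ := by
  refine Convex.norm_image_sub_le_of_norm_hasFDerivWithin_le (f' := fun x => fderiv ℝ g x)
    (fun x hx => ?_) hC (convex_segment u v) (left_mem_segment ℝ u v)
    (right_mem_segment ℝ u v)
  exact (((hg.contDiffAt (hU.mem_nhds (hseg hx))).differentiableAt
    (by simp [sm])).hasFDerivAt).hasFDerivWithinAt

end Derivs

end Stmt4Aux

/-- independence of representatives for all partial derivatives of a
defining net of a GSF (Theorem `thm:indepRepr`); in particular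
`[x_ε] ↦ [∂^α f_ε(x_ε)]` is well defined. -/
theorem stmt_4 {ρ : ℝ → ℝ} (hρ : IsGauge ρ) {n d : ℕ}
    (Ω : ℝ → Set (RVec n)) (fn : ℝ → RVec n → RVec d)
    (X : Set (RC ρ (RVec n))) (Y : Set (RC ρ (RVec d)))
    (hdef : DefinesGSF ρ Ω fn X Y) :
    ∀ α : Fin n → ℕ, ∀ a b : ModNet ρ (RVec n),
      RC.mk a ∈ X → RC.mk a = RC.mk b →
      REquiv ρ (fun ε => pderivM α (fn ε) (a.1 ε)) (fun ε => pderivM α (fn ε) (b.1 ε)) := by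
  classical
  intro α a b haX hmk
  have hab : REquiv ρ a.1 b.1 := (Stmt4Aux.rc_eq_iff hρ).1 hmk
  set l := 𝓝[>] (0:ℝ) with hl
  have evOpen : ∀ᶠ ε in l, IsOpen (Ω ε) := Stmt4Aux.ev_II.mono fun ε h => hdef.open' ε h
  have evSmooth : ∀ᶠ ε in l, ContDiffOn ℝ Stmt4Aux.sm (fn ε) (Ω ε) :=
    Stmt4Aux.ev_II.mono fun ε h => (hdef.smooth ε h).of_le (by simp)
  -- packaging of nets valued in the segment (or equal to `a`) as elements of `X`
  have mkEq : ∀ c : ℝ → RVec n, (∀ ε, c ε ∈ segment ℝ (a.1 ε) (b.1 ε) ∨ c ε = a.1 ε) →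
      ∃ hc : Moderate ρ c, RC.mk (⟨c, hc⟩ : ModNet ρ (RVec n)) = RC.mk a := by
    intro c hc
    obtain ⟨Na, hNa⟩ := a.2
    obtain ⟨Nb, hNb⟩ := b.2
    have hcb : ∀ ε, ‖c ε‖ ≤ max ‖a.1 ε‖ ‖b.1 ε‖ := by
      intro ε
      rcases hc ε with h | h
      · exact Stmt4Aux.norm_le_of_mem_segment h
      · rw [h]; exact le_max_left _ _
    have hmod : Moderate ρ c := by
      refine ⟨Na + Nb, Stmt4Aux.evSmall_iff.2 ?_⟩
      filter_upwards [Stmt4Aux.evSmall_iff.1 hNa, Stmt4Aux.evSmall_iff.1 hNb,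
        Stmt4Aux.ev_II] with ε h1 h2 hii
      have hρ0 := hρ.pos ε hii
      have hρ1 := hρ.le_one ε hii
      have ha' : ρ ε ^ (-(Na:ℤ)) ≤ ρ ε ^ (-((Na+Nb:ℕ):ℤ)) :=
        zpow_le_zpow_right_of_le_one₀ hρ0 hρ1 (by push_cast; omega)
      have hb' : ρ ε ^ (-(Nb:ℤ)) ≤ ρ ε ^ (-((Na+Nb:ℕ):ℤ)) :=
        zpow_le_zpow_right_of_le_one₀ hρ0 hρ1 (by push_cast; omega)
      calc ‖c ε‖ ≤ max ‖a.1 ε‖ ‖b.1 ε‖ := hcb ε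
        _ ≤ ρ ε ^ (-((Na+Nb:ℕ):ℤ)) := max_le (h1.trans ha') (h2.trans hb')
    refine ⟨hmod, (Stmt4Aux.rc_eq_iff hρ).2 ?_⟩
    intro m
    refine Stmt4Aux.evSmall_iff.2 ?_
    filter_upwards [Stmt4Aux.evSmall_iff.1 (hab m), Stmt4Aux.ev_rho_pos hρ] with ε h1 h2
    rcases hc ε with h | h
    · calc ‖c ε - a.1 ε‖ ≤ ‖b.1 ε - a.1 ε‖ := Stmt4Aux.norm_sub_left_of_mem_segment h
        _ = ‖a.1 ε - b.1 ε‖ := norm_sub_rev _ _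
        _ ≤ ρ ε ^ m := h1
    · rw [h]; simpa using pow_nonneg h2.le m
  -- the segment is eventually contained in `Ω ε`
  have evSeg : ∀ᶠ ε in l, segment ℝ (a.1 ε) (b.1 ε) ⊆ Ω ε := by
    set p : ℝ → RVec n := fun ε =>
      if h : ∃ q ∈ segment ℝ (a.1 ε) (b.1 ε), q ∉ Ω ε then h.choose else a.1 ε with hp
    obtain ⟨hpm, hpeq⟩ := mkEq p (fun ε => by
      by_cases h : ∃ q ∈ segment ℝ (a.1 ε) (b.1 ε), q ∉ Ω ε
      · left; rw [hp]; simp only [dif_pos h]; exact h.choose_spec.1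
      · right; rw [hp]; simp only [dif_neg h])
    have hpΩ : ∀ᶠ ε in l, p ε ∈ Ω ε :=
      Stmt4Aux.evSmall_iff.1 (hdef.domain haX ⟨p, hpm⟩ hpeq)
    filter_upwards [hpΩ] with ε hε q hq
    by_contra hqΩ
    have h : ∃ q ∈ segment ℝ (a.1 ε) (b.1 ε), q ∉ Ω ε := ⟨q, hq, hqΩ⟩
    have h2 := h.choose_spec.2
    rw [hp] at hε; simp only [dif_pos h] at hε
    exact h2 hε
  -- maximum points of `‖∂ᵢ ∂^α f_ε‖` on the segment
  set β : Fin n → Fin n → ℕ := fun i => Function.update α i (α i + 1) with hβ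
  set c : Fin n → ℝ → RVec n := fun i ε =>
    if h : ∃ p ∈ segment ℝ (a.1 ε) (b.1 ε),
        ∀ x ∈ segment ℝ (a.1 ε) (b.1 ε),
          ‖pderivI i (pderivM α (fn ε)) x‖ ≤ ‖pderivI i (pderivM α (fn ε)) p‖
      then h.choose else a.1 ε with hcdef
  have hcprop : ∀ i ε, c i ε ∈ segment ℝ (a.1 ε) (b.1 ε) ∨ c i ε = a.1 ε := by
    intro i ε
    by_cases h : ∃ p ∈ segment ℝ (a.1 ε) (b.1 ε),
        ∀ x ∈ segment ℝ (a.1 ε) (b.1 ε),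
          ‖pderivI i (pderivM α (fn ε)) x‖ ≤ ‖pderivI i (pderivM α (fn ε)) p‖
    · left; simp only [hcdef, dif_pos h]; exact h.choose_spec.1
    · right; simp only [hcdef, dif_neg h]
  have hcmk' : ∀ i, ∃ hm : Moderate ρ (c i),
      RC.mk (⟨c i, hm⟩ : ModNet ρ (RVec n)) = RC.mk a := fun i => mkEq (c i) (hcprop i)
  choose hcmod hcmk using hcmk'
  have hder : ∀ i : Fin n, ∃ N : ℕ,
      ∀ᶠ ε in l, ‖pderivM (β i) (fn ε) (c i ε)‖ ≤ ρ ε ^ (-(N:ℤ)) := by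
    intro i
    obtain ⟨N, hN⟩ := hdef.deriv_mod ⟨c i, hcmod i⟩ (by rw [hcmk i]; exact haX) (β i)
    exact ⟨N, Stmt4Aux.evSmall_iff.1 hN⟩
  choose N hN using hder
  set N₀ : ℕ := Finset.univ.sup N with hN₀
  -- the final estimate
  intro m
  refine Stmt4Aux.evSmall_iff.2 ?_
  have evab : ∀ᶠ ε in l, ‖a.1 ε - b.1 ε‖ ≤ ρ ε ^ (m + N₀ + 1) :=
    Stmt4Aux.evSmall_iff.1 (hab (m + N₀ + 1))
  have evsmall : ∀ᶠ ε in l, ρ ε ≤ 1/(n+1) := Stmt4Aux.ev_rho_le hρ (by positivity)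
  have evall : ∀ᶠ ε in l, ∀ i : Fin n, ‖pderivM (β i) (fn ε) (c i ε)‖ ≤ ρ ε ^ (-(N i:ℤ)) :=
    eventually_all.2 hN
  filter_upwards [evOpen, evSmooth, evSeg, evall, evab, evsmall,
    Stmt4Aux.ev_rho_pos hρ, Stmt4Aux.ev_rho_le_one hρ] with ε hop hsm hsub hbnd habε hsml hρ0 hρ1
  show ‖pderivM α (fn ε) (a.1 ε) - pderivM α (fn ε) (b.1 ε)‖ ≤ ρ ε ^ m
  set g := pderivM α (fn ε) with hg
  have hgsm : ContDiffOn ℝ Stmt4Aux.sm g (Ω ε) := Stmt4Aux.pderivM_contDiffOn α hop hsm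
  have hmax : ∀ i : Fin n, c i ε ∈ segment ℝ (a.1 ε) (b.1 ε) ∧
      ∀ x ∈ segment ℝ (a.1 ε) (b.1 ε), ‖pderivI i g x‖ ≤ ‖pderivI i g (c i ε)‖ := by
    intro i
    have hcont : ContinuousOn (fun x => ‖pderivI i g x‖) (segment ℝ (a.1 ε) (b.1 ε)) :=
      (((Stmt4Aux.pderivI_contDiffOn hop hgsm i).continuousOn).mono hsub).norm
    obtain ⟨p, hp, hpmax⟩ := (Stmt4Aux.isCompact_segment' (a.1 ε) (b.1 ε)).exists_isMaxOn
      ⟨a.1 ε, left_mem_segment ℝ _ _⟩ hcont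
    have hex : ∃ p ∈ segment ℝ (a.1 ε) (b.1 ε),
        ∀ x ∈ segment ℝ (a.1 ε) (b.1 ε),
          ‖pderivI i (pderivM α (fn ε)) x‖ ≤ ‖pderivI i (pderivM α (fn ε)) p‖ :=
      ⟨p, hp, fun x hx => (isMaxOn_iff.1 hpmax) x hx⟩
    constructor
    · simp only [hcdef, dif_pos hex]; exact hex.choose_spec.1
    · intro x hx
      simp only [hcdef, dif_pos hex]
      exact hex.choose_spec.2 x hx
  have hCbound : ∀ x ∈ segment ℝ (a.1 ε) (b.1 ε),
      ‖fderiv ℝ g x‖ ≤ (n:ℝ) * ρ ε ^ (-(N₀:ℤ)) := by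
    intro x hx
    have h1 : ‖fderiv ℝ g x‖ ≤ ∑ i, ‖pderivI i g x‖ := Stmt4Aux.opNorm_le_sum (fderiv ℝ g x)
    refine h1.trans ?_
    have h2 : ∀ i : Fin n, ‖pderivI i g x‖ ≤ ρ ε ^ (-(N₀:ℤ)) := by
      intro i
      have h4 : pderivI i g (c i ε) = pderivM (β i) (fn ε) (c i ε) :=
        Stmt4Aux.pderivI_pderivM α i hop hsm (hsub (hmax i).1)
      have h5 : ρ ε ^ (-(N i:ℤ)) ≤ ρ ε ^ (-(N₀:ℤ)) := by
        refine zpow_le_zpow_right_of_le_one₀ hρ0 hρ1 ?_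
        have := Finset.le_sup (f := N) (Finset.mem_univ i)
        rw [← hN₀] at this
        omega
      calc ‖pderivI i g x‖ ≤ ‖pderivI i g (c i ε)‖ := (hmax i).2 x hx
        _ = ‖pderivM (β i) (fn ε) (c i ε)‖ := by rw [h4]
        _ ≤ ρ ε ^ (-(N i:ℤ)) := hbnd i
        _ ≤ _ := h5
    calc ∑ i, ‖pderivI i g x‖ ≤ ∑ _i : Fin n, ρ ε ^ (-(N₀:ℤ)) :=
          Finset.sum_le_sum fun i _ => h2 i
      _ = (n:ℝ) * ρ ε ^ (-(N₀:ℤ)) := by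
          rw [Finset.sum_const, Finset.card_univ, Fintype.card_fin, nsmul_eq_mul]
  have hmvt : ‖g (b.1 ε) - g (a.1 ε)‖ ≤ (n:ℝ) * ρ ε ^ (-(N₀:ℤ)) * ‖b.1 ε - a.1 ε‖ :=
    Stmt4Aux.mvt hop hgsm hsub hCbound
  have hba : ‖b.1 ε - a.1 ε‖ ≤ ρ ε ^ (m + N₀ + 1) := by
    rw [norm_sub_rev]; exact habε
  have hnn : (0:ℝ) ≤ (n:ℝ) * ρ ε ^ (-(N₀:ℤ)) := by positivity
  calc ‖g (a.1 ε) - g (b.1 ε)‖ = ‖g (b.1 ε) - g (a.1 ε)‖ := norm_sub_rev _ _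
    _ ≤ (n:ℝ) * ρ ε ^ (-(N₀:ℤ)) * ρ ε ^ (m + N₀ + 1) :=
        hmvt.trans (mul_le_mul_of_nonneg_left hba hnn)
    _ = ((n:ℝ) * ρ ε) * ρ ε ^ m := by
        have h7 : ρ ε ^ (-(N₀:ℤ)) * ρ ε ^ ((m + N₀ + 1 : ℕ):ℤ) = ρ ε ^ ((m + 1 : ℕ):ℤ) := by
          rw [← zpow_add₀ (ne_of_gt hρ0)]
          congr 1
          push_cast
          ring
        rw [mul_assoc, ← zpow_natCast (ρ ε) (m + N₀ + 1), h7, zpow_natCast, pow_succ]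
        ring
    _ ≤ 1 * ρ ε ^ m := by
        refine mul_le_mul_of_nonneg_right ?_ (by positivity)
        calc (n:ℝ) * ρ ε ≤ (n:ℝ) * (1/(n+1)) :=
              mul_le_mul_of_nonneg_left hsml (by positivity)
          _ ≤ 1 := by
              rw [mul_one_div, div_le_one (by positivity)]
              linarith
    _ = ρ ε ^ m := one_mul _
end
end
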